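/- arXiv:1603.04280 — 6 statements merged into one kernel-verified Lean document; each statement's English description precedes it below -/
import Mathlib

section
/- Let G be a simple graph on n vertices with maximum degree Δ and let S be the skew-adjacency matrix of an orientation of G. The skew energy of the orientation equals n·√Δ if and only if SᵀS = Δ·Iₙ. -/
open Matrix BigOperators

/-- The skew energy of a real matrix `S`: the sum of its singular values, i.e. the
square roots of the eigenvalues of `Sᵀ * S` (which equals `Sᴴ * S` over `ℝ`). -/
noncomputable def skewEnergy {α : Type*} [Fintype α] [DecidableEq α]
    (S : Matrix α α ℝ) : ℝ :=
  ∑ i, Real.sqrt ((Matrix.isHermitian_conjTranspose_mul_self S).eigenvalues i)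

/-- `S` is the skew-adjacency matrix of some orientation of the simple graph `G`:
`S` is skew-symmetric with entries in `{0, ±1}` and `|S i j| = 1` iff `ij` is an edge. -/
def IsSkewAdj {α : Type*} (G : SimpleGraph α) (S : Matrix α α ℝ) : Prop :=
  Sᵀ = -S ∧ ∀ i j, (G.Adj i j → (S i j = 1 ∨ S i j = -1)) ∧ (¬ G.Adj i j → S i j = 0)

/-!
The eigenvalues `λᵢ` of `SᵀS` are nonnegative and sum to `tr (SᵀS) = ∑ᵥ deg v ≤ nΔ`. Hence the
numbers `yᵢ = √λᵢ` satisfy `∑ yᵢ² ≤ n (√Δ)²`, and then `∑ yᵢ = n √Δ` forces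
`∑ (yᵢ - √Δ)² ≤ 0`, i.e. every `λᵢ = Δ`. By the spectral theorem, a Hermitian matrix all of
whose eigenvalues equal `Δ` is `Δ • 1`.
-/

theorem sum_eq_card_mul_iff_of_sum_sq_le {ι : Type*} [Fintype ι] {y : ι → ℝ} {d : ℝ}
    (h : ∑ i, y i ^ 2 ≤ Fintype.card ι * d ^ 2) :
    ∑ i, y i = Fintype.card ι * d ↔ ∀ i, y i = d := by
  refine ⟨fun hsum i => ?_, fun hy => by simp [hy]⟩
  have hdev : ∑ i, (y i - d) ^ 2 = ∑ i, y i ^ 2 - Fintype.card ι * d ^ 2 := by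
    simp only [sub_sq, Finset.sum_add_distrib, Finset.sum_sub_distrib, ← Finset.sum_mul,
      ← Finset.mul_sum, hsum, Finset.sum_const, Finset.card_univ, nsmul_eq_mul]
    ring
  have hzero : ∑ i, (y i - d) ^ 2 = 0 :=
    le_antisymm (by linarith) (Finset.sum_nonneg fun i _ => sq_nonneg _)
  have hi := (Finset.sum_eq_zero_iff_of_nonneg fun i _ => sq_nonneg (y i - d)).mp hzero i
    (Finset.mem_univ i)
  exact sub_eq_zero.mp (pow_eq_zero_iff two_ne_zero |>.mp hi)

namespace Matrix.IsHermitian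

variable {𝕜 n : Type*} [RCLike 𝕜] [Fintype n] [DecidableEq n] {A : Matrix n n 𝕜}

theorem eigenvalues_eq_const_iff (hA : A.IsHermitian) (c : ℝ) :
    (∀ i, hA.eigenvalues i = c) ↔ A = c • 1 := by
  constructor
  · intro h
    rw [hA.spectral_theorem, show RCLike.ofReal ∘ hA.eigenvalues = fun _ => (c : 𝕜) from
      funext fun i => congrArg _ (h i), ← smul_one_eq_diagonal, map_smul, map_one,
      RCLike.real_smul_eq_coe_smul (K := 𝕜)]
  · intro h i
    subst h
    -- `spectrum.scalar_eq` needs the matrix algebra to be nontrivial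
    have : Nonempty n := ⟨i⟩
    have hspec : spectrum ℝ (c • 1 : Matrix n n 𝕜) = {c} := by
      rw [← Algebra.algebraMap_eq_smul_one, spectrum.scalar_eq]
    simpa [hspec] using hA.eigenvalues_mem_spectrum_real i

end Matrix.IsHermitian

theorem skewEnergy_eq_card_mul_sqrt_iff {α : Type*} [Fintype α] [DecidableEq α]
    (S : Matrix α α ℝ) {c : ℝ} (hc : 0 ≤ c) (htr : (Sᵀ * S).trace ≤ Fintype.card α * c) :
    skewEnergy S = Fintype.card α * √c ↔ Sᵀ * S = c • 1 := by
  have hA := isHermitian_conjTranspose_mul_self S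
  have hnn := eigenvalues_conjTranspose_mul_self_nonneg S
  rw [← conjTranspose_eq_transpose_of_trivial] at htr ⊢
  have hsum : ∑ i, √(hA.eigenvalues i) ^ 2 ≤ Fintype.card α * √c ^ 2 := by
    rw [hA.trace_eq_sum_eigenvalues] at htr
    simp only [RCLike.ofReal_real_eq_id, id_eq] at htr
    rwa [Finset.sum_congr rfl fun i _ => Real.sq_sqrt (hnn i), Real.sq_sqrt hc]
  rw [← hA.eigenvalues_eq_const_iff]
  unfold skewEnergy
  rw [sum_eq_card_mul_iff_of_sum_sq_le hsum]
  exact forall_congr' fun i => Real.sqrt_inj (hnn i) hc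

namespace IsSkewAdj

variable {α : Type*} {G : SimpleGraph α} [DecidableRel G.Adj] {S : Matrix α α ℝ}

theorem mul_self_apply (hS : IsSkewAdj G S) (i j : α) :
    S i j * S i j = if G.Adj i j then 1 else 0 := by
  by_cases h : G.Adj i j
  · rcases (hS.2 i j).1 h with h' | h' <;> simp [h', h]
  · simp [(hS.2 i j).2 h, h]

variable [Fintype α]

theorem transpose_mul_self_apply_self (hS : IsSkewAdj G S) (i : α) :
    (Sᵀ * S) i i = G.degree i := by
  simp only [mul_apply, transpose_apply, hS.mul_self_apply, G.adj_comm _ i, Finset.sum_boole,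
    ← G.card_neighborFinset_eq_degree, SimpleGraph.neighborFinset_eq_filter]

theorem trace_transpose_mul_self_le (hS : IsSkewAdj G S) :
    (Sᵀ * S).trace ≤ Fintype.card α * G.maxDegree := by
  calc (Sᵀ * S).trace = ∑ i, (G.degree i : ℝ) :=
        Finset.sum_congr rfl fun i _ => hS.transpose_mul_self_apply_self i
    _ ≤ ∑ _i : α, (G.maxDegree : ℝ) :=
        Finset.sum_le_sum fun i _ => Nat.cast_le.mpr (G.degree_le_maxDegree i)
    _ = Fintype.card α * G.maxDegree := by simp

end IsSkewAdj

theorem skewEnergy_eq_iff {n : ℕ} (G : SimpleGraph (Fin n))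
    [DecidableRel G.Adj] (S : Matrix (Fin n) (Fin n) ℝ) (hS : IsSkewAdj G S) :
    skewEnergy S = n * Real.sqrt G.maxDegree ↔
      Sᵀ * S = (G.maxDegree : ℝ) • 1 := by
  simpa using skewEnergy_eq_card_mul_sqrt_iff S (Nat.cast_nonneg G.maxDegree)
    hS.trace_transpose_mul_self_le
end

section
/- Let S be the skew-adjacency matrix of an oriented graph G^σ on n vertices, and suppose SᵀS = k·Iₙ for some k. Then for any two distinct vertices u and v of the underlying graph G, the number of common neighbors |N(u) ∩ N(v)| is even. -/
/-!
Off the diagonal, `(Sᵀ S) u v = ∑_w S w u * S w v`, and only common neighbours `w` of `u` and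
`v` contribute, each with a term `±1`. A sum of `±1`'s can only vanish over an even number of
terms, since adding `1` to each term turns the sum into twice the number of `+1`'s.
-/

open Matrix BigOperators

/-!
Off the diagonal, `(Sᵀ S) u v = ∑_w S w u * S w v`, and only common neighbours `w` of `u` and
`v` contribute, each with a term `±1`. A sum of `±1`'s can only vanish over an even number of
terms, since adding `1` to each term turns the sum into twice the number of `+1`'s.
-/

theorem Finset.even_card_of_sum_eq_zero_of_eq_one_or_eq_neg_one {ι R : Type*} [Ring R]
    [CharZero R] {s : Finset ι} {f : ι → R} (hf : ∀ i ∈ s, f i = 1 ∨ f i = -1)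
    (hsum : ∑ i ∈ s, f i = 0) : Even s.card := by
  classical
  have hshift : ∀ i ∈ s, f i + 1 = 2 * if f i = 1 then 1 else 0 := by
    intro i hi
    split_ifs with h1
    · rw [h1]; norm_num
    · rw [(hf i hi).resolve_left h1]; norm_num
  have hcard : (s.card : R) = ((2 * (s.filter fun i => f i = 1).card : ℕ) : R) := by
    calc (s.card : R) = ∑ i ∈ s, (f i + 1) := by simp [Finset.sum_add_distrib, hsum]
      _ = ∑ i ∈ s, 2 * if f i = 1 then (1 : R) else 0 := Finset.sum_congr rfl hshift
      _ = _ := by rw [← Finset.mul_sum, Finset.sum_boole]; push_cast; rfl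
  exact ⟨_, (Nat.cast_injective hcard).trans (two_mul _)⟩

namespace IsSkewAdj

variable {α : Type*} {G : SimpleGraph α} {S : Matrix α α ℝ}

theorem mul_apply_eq_one_or_eq_neg_one (hS : IsSkewAdj G S) {u v w : α} (hu : G.Adj w u)
    (hv : G.Adj w v) : S w u * S w v = 1 ∨ S w u * S w v = -1 := by
  rcases (hS.2 w u).1 hu with h₁ | h₁ <;> rcases (hS.2 w v).1 hv with h₂ | h₂ <;>
    simp [h₁, h₂]

theorem transpose_mul_self_apply [Fintype α] [DecidableEq α] [DecidableRel G.Adj]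
    (hS : IsSkewAdj G S) (u v : α) :
    (Sᵀ * S) u v = ∑ w ∈ G.neighborFinset u ∩ G.neighborFinset v, S w u * S w v := by
  rw [mul_apply, eq_comm]
  refine Finset.sum_subset (Finset.subset_univ _) fun w _ hw => ?_
  simp only [Finset.mem_inter, SimpleGraph.mem_neighborFinset, not_and_or] at hw
  rcases hw with hu | hv
  · simp [(hS.2 w u).2 fun h => hu h.symm]
  · simp [(hS.2 w v).2 fun h => hv h.symm]

theorem even_card_common_neighbors_of_transpose_mul_self_apply_eq_zero [Fintype α]
    [DecidableEq α] [DecidableRel G.Adj] (hS : IsSkewAdj G S) {u v : α}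
    (huv : (Sᵀ * S) u v = 0) :
    Even (G.neighborFinset u ∩ G.neighborFinset v).card := by
  refine Finset.even_card_of_sum_eq_zero_of_eq_one_or_eq_neg_one (fun w hw => ?_)
    (hS.transpose_mul_self_apply u v ▸ huv)
  simp only [Finset.mem_inter, SimpleGraph.mem_neighborFinset] at hw
  exact hS.mul_apply_eq_one_or_eq_neg_one hw.1.symm hw.2.symm

end IsSkewAdj

theorem even_card_common_neighbors {n : ℕ} (G : SimpleGraph (Fin n))
    [DecidableRel G.Adj] (S : Matrix (Fin n) (Fin n) ℝ) (k : ℝ)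
    (hS : IsSkewAdj G S) (h : Sᵀ * S = k • 1) :
    ∀ u v : Fin n, u ≠ v →
      Even (G.neighborFinset u ∩ G.neighborFinset v).card := by
  intro u v huv
  exact hS.even_card_common_neighbors_of_transpose_mul_self_apply_eq_zero
    (by rw [h, Matrix.smul_apply, one_apply_ne huv, smul_zero])
end

section
/- Let G^σ be a 5-regular oriented graph on n vertices whose skew-adjacency matrix S satisfies SᵀS = 5·Iₙ. Then for any two distinct vertices u and v, |N(u) ∩ N(v)| ∈ {0, 2, 4}. -/
open Matrix BigOperators

/-!
Orthogonality of columns `u ≠ v` of `S` says `∑ₖ S k u * S k v = 0`. The summand vanishes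
unless `k` is a common neighbour of `u` and `v`, where it is `±1`; so the common neighbours
split into two classes of equal size and their number is even. It is at most the degree `5`.
-/

theorem Finset.even_card_of_sum_eq_zero {ι R : Type*} [Ring R] [CharZero R]
    {s : Finset ι} {f : ι → R} (hf : ∀ k ∈ s, f k = 1 ∨ f k = -1)
    (hsum : ∑ k ∈ s, f k = 0) : Even s.card := by
  classical
  have hneg : ∀ k ∈ s.filter (fun k => ¬ f k = 1), f k = -1 := fun k hk =>
    (hf k (mem_filter.mp hk).1).resolve_left (mem_filter.mp hk).2
  have hsplit : ((s.filter (f · = 1)).card : R) - (s.filter (fun k => ¬ f k = 1)).card = 0 := by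
    rw [← hsum, ← sum_filter_add_sum_filter_not s (f · = 1),
      sum_congr rfl fun k hk => (mem_filter.mp hk).2,
      sum_congr rfl hneg]
    simp [sub_eq_add_neg]
  have hcard : (s.filter (f · = 1)).card = (s.filter (fun k => ¬ f k = 1)).card := by
    exact_mod_cast sub_eq_zero.mp hsplit
  rw [← card_filter_add_card_filter_not (f · = 1), hcard]
  exact ⟨_, rfl⟩

namespace IsSkewAdj

variable {α : Type*} [Fintype α] [DecidableEq α] {G : SimpleGraph α} [DecidableRel G.Adj]
  {S : Matrix α α ℝ}

theorem mul_apply_eq_zero_of_notMem (hS : IsSkewAdj G S) {u v k : α}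
    (hk : k ∉ G.neighborFinset u ∩ G.neighborFinset v) : S k u * S k v = 0 := by
  simp only [Finset.mem_inter, SimpleGraph.mem_neighborFinset, not_and_or] at hk
  rcases hk with hk | hk
  · rw [(hS.2 k u).2 (mt G.adj_symm hk), zero_mul]
  · rw [(hS.2 k v).2 (mt G.adj_symm hk), mul_zero]

theorem mul_apply_eq_one_or_neg_one (hS : IsSkewAdj G S) {u v k : α}
    (hk : k ∈ G.neighborFinset u ∩ G.neighborFinset v) :
    S k u * S k v = 1 ∨ S k u * S k v = -1 := by
  simp only [Finset.mem_inter, SimpleGraph.mem_neighborFinset] at hk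
  rcases (hS.2 k u).1 hk.1.symm with hu | hu <;>
    rcases (hS.2 k v).1 hk.2.symm with hv | hv <;> simp [hu, hv]

theorem even_card_common_neighbors (hS : IsSkewAdj G S) {u v : α}
    (horth : ∑ k, S k u * S k v = 0) :
    Even (G.neighborFinset u ∩ G.neighborFinset v).card := by
  refine Finset.even_card_of_sum_eq_zero (fun k hk => hS.mul_apply_eq_one_or_neg_one hk) ?_
  rw [Finset.sum_subset (Finset.subset_univ _) fun k _ hk => hS.mul_apply_eq_zero_of_notMem hk]
  exact horth

end IsSkewAdj

theorem card_common_neighbors_mem {n : ℕ} (G : SimpleGraph (Fin n))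
    [DecidableRel G.Adj] (hreg : G.IsRegularOfDegree 5)
    (S : Matrix (Fin n) (Fin n) ℝ) (hS : IsSkewAdj G S)
    (h : Sᵀ * S = (5 : ℝ) • 1) :
    ∀ u v : Fin n, u ≠ v →
      (G.neighborFinset u ∩ G.neighborFinset v).card ∈ ({0, 2, 4} : Set ℕ) := by
  intro u v huv
  have horth : ∑ k, S k u * S k v = 0 := by
    simpa [Matrix.mul_apply, Matrix.one_apply, huv] using congrFun (congrFun h u) v
  obtain ⟨m, hm⟩ := IsSkewAdj.even_card_common_neighbors hS horth
  have hle : (G.neighborFinset u ∩ G.neighborFinset v).card ≤ 5 := by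
    rw [← hreg u, ← G.card_neighborFinset_eq_degree]
    exact Finset.card_le_card Finset.inter_subset_left
  simp only [Set.mem_insert_iff, Set.mem_singleton_iff]
  omega
end

section
/- Let G^σ be an oriented k-regular graph on n vertices whose skew-adjacency matrix S satisfies SᵀS = k·Iₙ. Then the Cartesian product P₂ □ G admits an orientation whose skew-adjacency matrix T satisfies TᵀT = (k+1)·I_{2n}; hence P₂ □ G has maximum skew energy 2n√(k+1). -/
/-! With `J = !![0, 1; -1, 0]` the skew-adjacency matrix of the oriented edge and
`D = diag(1, -1)`, take `T = J ⊗ I + D ⊗ S`. Because `J² = -I`, `D² = I` and `DJ = -JD`,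
the cross terms cancel and `T² = -I ⊗ I + I ⊗ S² = -(k + 1) I`; as `T` is skew this is
`TᵀT = (k + 1) I`, so all `2n` singular values of `T` equal `√(k + 1)`. -/

open Matrix BigOperators

open scoped Kronecker

lemma Matrix.IsHermitian.eigenvalues_eq_of_eq_smul_one {𝕜 α : Type*} [RCLike 𝕜] [Fintype α]
    [DecidableEq α] {A : Matrix α α 𝕜} (hA : A.IsHermitian) {c : ℝ} (hc : A = (c : 𝕜) • 1)
    (i : α) : hA.eigenvalues i = c := by
  set v := ⇑(hA.eigenvectorBasis i)
  have hv : v ≠ 0 := (WithLp.ofLp_eq_zero 2).ne.2 (hA.eigenvectorBasis.orthonormal.ne_zero i)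
  refine smul_left_injective ℝ hv ?_
  calc hA.eigenvalues i • v = A *ᵥ v := (hA.mulVec_eigenvectorBasis i).symm
    _ = c • v := by
      rw [congrArg (· *ᵥ v) hc, smul_mulVec, one_mulVec, RCLike.real_smul_eq_coe_smul (K := 𝕜)]

lemma skewEnergy_eq_of_transpose_mul_self_eq_smul_one {α : Type*} [Fintype α] [DecidableEq α]
    {T : Matrix α α ℝ} {c : ℝ} (hT : Tᵀ * T = c • 1) :
    skewEnergy T = Fintype.card α * √c := by
  have hTT : Tᴴ * T = (c : ℝ) • 1 := by rwa [conjTranspose_eq_transpose_of_trivial]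
  have := (isHermitian_conjTranspose_mul_self T).eigenvalues_eq_of_eq_smul_one hTT
  rw [skewEnergy, Finset.sum_congr rfl fun i _ => by rw [this i]]
  simp

section Prism

variable {R α : Type*} [CommRing R] [DecidableEq α]

/-- The block matrix `[[S, 1], [-1, -S]]`, rows and columns indexed by `Fin 2 × α`. -/
def prismSkewAdj (S : Matrix α α R) : Matrix (Fin 2 × α) (Fin 2 × α) R :=
  !![0, 1; -1, 0] ⊗ₖ 1 + !![1, 0; 0, -1] ⊗ₖ S

lemma prismSkewAdj_apply (S : Matrix α α R) (a b : Fin 2) (i j : α) :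
    prismSkewAdj S (a, i) (b, j) =
      !![0, 1; -1, 0] a b * (1 : Matrix α α R) i j + !![1, 0; 0, -1] a b * S i j :=
  rfl

lemma transpose_prismSkewAdj {S : Matrix α α R} (hS : Sᵀ = -S) :
    (prismSkewAdj S)ᵀ = -prismSkewAdj S := by
  ext ⟨a, i⟩ ⟨b, j⟩
  have hSji := congrFun (congrFun hS i) j
  simp only [transpose_apply, prismSkewAdj_apply, Matrix.neg_apply] at hSji ⊢
  fin_cases a <;> fin_cases b <;> simp [one_apply, eq_comm (a := i), neg_ite, hSji]

lemma transpose_mul_self_prismSkewAdj [Fintype α] {S : Matrix α α R} {c : R} (hS : Sᵀ = -S)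
    (h : Sᵀ * S = c • 1) : (prismSkewAdj S)ᵀ * prismSkewAdj S = (c + 1) • 1 := by
  set J : Matrix (Fin 2) (Fin 2) R := !![0, 1; -1, 0]
  set D : Matrix (Fin 2) (Fin 2) R := !![1, 0; 0, -1]
  have hJJ : J * J = (-1 : R) • 1 := by ext a b; fin_cases a <;> fin_cases b <;> simp [J]
  have hDD : D * D = 1 := by ext a b; fin_cases a <;> fin_cases b <;> simp [D]
  have hDJ : D * J + J * D = 0 := by ext a b; fin_cases a <;> fin_cases b <;> simp [J, D]
  have hSS : S * S = (-c) • 1 := by rw [neg_smul, ← h, hS, neg_mul, neg_neg]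
  calc (prismSkewAdj S)ᵀ * prismSkewAdj S = -((J ⊗ₖ 1 + D ⊗ₖ S) * (J ⊗ₖ 1 + D ⊗ₖ S)) := by
        rw [transpose_prismSkewAdj hS, neg_mul]; rfl
    _ = -((J * J) ⊗ₖ 1 + (D * J + J * D) ⊗ₖ S + (D * D) ⊗ₖ (S * S)) := by
        simp only [add_mul, mul_add, ← mul_kronecker_mul, one_mul, mul_one, add_kronecker]; abel
    _ = (c + 1) • 1 := by
        rw [hJJ, hDJ, hDD, hSS]
        simp only [smul_kronecker, kronecker_smul, one_kronecker_one, zero_kronecker]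
        module

end Prism

theorem IsSkewAdj.prismSkewAdj {α : Type*} [DecidableEq α] {G : SimpleGraph α}
    {S : Matrix α α ℝ} (hS : IsSkewAdj G S) :
    IsSkewAdj ((SimpleGraph.pathGraph 2).boxProd G) (prismSkewAdj S) := by
  obtain ⟨hskew, hentries⟩ := hS
  refine ⟨transpose_prismSkewAdj hskew, ?_⟩
  rintro ⟨a, i⟩ ⟨b, j⟩
  rw [SimpleGraph.boxProd_adj, SimpleGraph.pathGraph_two_eq_top, prismSkewAdj_apply]
  rcases eq_or_ne i j with rfl | hij
  · have hii : S i i = 0 := (hentries i i).2 G.irrefl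
    fin_cases a <;> fin_cases b <;> simp [hii]
  · have hneg : -S i j = 1 ∨ S i j = 1 ↔ S i j = 1 ∨ S i j = -1 := by
      rw [neg_eq_iff_eq_neg, or_comm]
    fin_cases a <;> fin_cases b <;> simp [one_apply, hij, hneg] <;>
      exact hentries i j

theorem boxProd_pathGraph_optimum_general {n k : ℕ} (G : SimpleGraph (Fin n))
    (S : Matrix (Fin n) (Fin n) ℝ) (hS : IsSkewAdj G S)
    (h : Sᵀ * S = (k : ℝ) • 1) :
    ∃ T : Matrix (Fin 2 × Fin n) (Fin 2 × Fin n) ℝ,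
      IsSkewAdj ((SimpleGraph.pathGraph 2).boxProd G) T ∧
      Tᵀ * T = ((k : ℝ) + 1) • 1 ∧
      skewEnergy T = 2 * n * Real.sqrt (k + 1) := by
  have hT := transpose_mul_self_prismSkewAdj hS.1 h
  refine ⟨prismSkewAdj S, hS.prismSkewAdj, hT, ?_⟩
  simp [skewEnergy_eq_of_transpose_mul_self_eq_smul_one hT]

theorem boxProd_pathGraph_optimum {n k : ℕ} (G : SimpleGraph (Fin n))
    [DecidableRel G.Adj] (hreg : G.IsRegularOfDegree k)
    (S : Matrix (Fin n) (Fin n) ℝ) (hS : IsSkewAdj G S)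
    (h : Sᵀ * S = (k : ℝ) • 1) :
    ∃ T : Matrix (Fin 2 × Fin n) (Fin 2 × Fin n) ℝ,
      IsSkewAdj ((SimpleGraph.pathGraph 2).boxProd G) T ∧
      Tᵀ * T = ((k : ℝ) + 1) • 1 ∧
      skewEnergy T = 2 * n * Real.sqrt (k + 1) :=
  boxProd_pathGraph_optimum_general G S hS h
end

section
/- Let G be a connected 5-regular graph containing K₄ as a subgraph such that every pair of distinct vertices has an even number of common neighbors, and suppose that for some vertex v₁ of the K₄, the other three K₄-vertices are all adjacent to both remaining neighbors v₅, v₆ of v₁. Then G is isomorphic to K₆. -/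
open Matrix BigOperators

/-!
The parity condition applied to the edge `v₁v₅` forces `v₅ ~ v₆`: the common neighbours of `v₁`
and `v₅` are `v₂, v₃, v₄` together with `v₆` if `v₅ ~ v₆`. Hence `v₁, …, v₆` span a `K₆`. In a
`5`-regular graph each vertex of a `K₆` has all its neighbours inside the `K₆`, so by connectivity
the `K₆` is the whole graph.
-/

namespace SimpleGraph

open Finset

variable {V : Type*} {G : SimpleGraph V}

theorem Reachable.mem_of_adj_mem {s : Set V} (hs : ∀ ⦃a b⦄, G.Adj a b → a ∈ s → b ∈ s)
    {u v : V} (huv : G.Reachable u v) (hu : u ∈ s) : v ∈ s := by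
  obtain ⟨p⟩ := huv
  induction p with
  | nil => exact hu
  | cons hadj _ ih => exact ih (hs hadj hu)

section Finite

variable [Fintype V] [DecidableEq V] [DecidableRel G.Adj]

theorem adj_of_even_card_inter_neighborFinset {u x y : V} {t : Finset V}
    (heven : Even #(G.neighborFinset u ∩ G.neighborFinset x))
    (hsub : G.neighborFinset u ⊆ insert x (insert y t))
    (ht : t ⊆ G.neighborFinset u ∩ G.neighborFinset x) (hodd : Odd #t) : G.Adj x y := by
  by_contra hxy
  have hcommon : G.neighborFinset u ∩ G.neighborFinset x = t := by
    refine Subset.antisymm (fun z hz => ?_) ht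
    obtain ⟨hzu, hzx⟩ := mem_inter.1 hz
    rw [mem_neighborFinset] at hzx
    rcases mem_insert.1 (hsub hzu) with rfl | hz'
    · exact (G.irrefl hzx).elim
    rcases mem_insert.1 hz' with rfl | hzt
    · exact absurd hzx hxy
    · exact hzt
  rw [hcommon] at heven
  exact Nat.not_even_iff_odd.2 hodd heven

namespace IsRegularOfDegree

variable {k : ℕ} {s : Finset V}

theorem neighborFinset_eq_erase_of_isNClique (hreg : G.IsRegularOfDegree k)
    (hs : G.IsNClique (k + 1) s) {u : V} (hu : u ∈ s) : G.neighborFinset u = s.erase u := by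
  refine (eq_of_subset_of_card_le (fun v hv => ?_) ?_).symm
  · exact (G.mem_neighborFinset u v).2
      (hs.isClique hu (mem_of_mem_erase hv) (ne_of_mem_erase hv).symm)
  · rw [card_neighborFinset_eq_degree, hreg u, card_erase_of_mem hu, hs.card_eq,
      Nat.add_sub_cancel]

theorem isNClique_eq_univ (hreg : G.IsRegularOfDegree k) (hconn : G.Preconnected)
    (hs : G.IsNClique (k + 1) s) : s = univ := by
  obtain ⟨u, hu⟩ : s.Nonempty := card_pos.1 (hs.card_eq ▸ k.succ_pos)
  have hclosed : ∀ ⦃a b⦄, G.Adj a b → a ∈ (s : Set V) → b ∈ (s : Set V) := fun a b hab ha =>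
    mem_of_mem_erase <| neighborFinset_eq_erase_of_isNClique hreg hs ha ▸
      (G.mem_neighborFinset a b).2 hab
  exact eq_univ_of_forall fun v => (hconn u v).mem_of_adj_mem hclosed hu

theorem nonempty_iso_top_of_isNClique (hreg : G.IsRegularOfDegree k) (hconn : G.Preconnected)
    (hs : G.IsNClique (k + 1) s) : Nonempty (G ≃g (⊤ : SimpleGraph (Fin (k + 1)))) := by
  have hsu := isNClique_eq_univ hreg hconn hs
  have htop : G = ⊤ := isClique_univ.1 (by simpa [hsu] using hs.isClique)
  have hcard : Fintype.card V = k + 1 := by rw [← card_univ, ← hsu, hs.card_eq]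
  subst htop
  exact ⟨Iso.completeGraph (Fintype.equivFinOfCardEq hcard)⟩

end IsRegularOfDegree

end Finite

end SimpleGraph

open SimpleGraph Finset in
theorem case_222_gives_K6 {V : Type*} [Fintype V] [DecidableEq V]
    (G : SimpleGraph V) [DecidableRel G.Adj]
    (hconn : G.Connected) (hreg : G.IsRegularOfDegree 5)
    (heven : ∀ u v : V, u ≠ v →
      Even (G.neighborFinset u ∩ G.neighborFinset v).card)
    (v₁ v₂ v₃ v₄ v₅ v₆ : V)
    (hK4 : G.Adj v₁ v₂ ∧ G.Adj v₁ v₃ ∧ G.Adj v₁ v₄ ∧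
           G.Adj v₂ v₃ ∧ G.Adj v₂ v₄ ∧ G.Adj v₃ v₄)
    (hN : G.neighborFinset v₁ = {v₂, v₃, v₄, v₅, v₆})
    (h5 : G.Adj v₂ v₅ ∧ G.Adj v₃ v₅ ∧ G.Adj v₄ v₅)
    (h6 : G.Adj v₂ v₆ ∧ G.Adj v₃ v₆ ∧ G.Adj v₄ v₆) :
    Nonempty (G ≃g (⊤ : SimpleGraph (Fin 6))) := by
  obtain ⟨a12, a13, a14, a23, a24, a34⟩ := hK4
  obtain ⟨a25, a35, a45⟩ := h5
  obtain ⟨a26, a36, a46⟩ := h6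
  have a15 : G.Adj v₁ v₅ := (G.mem_neighborFinset _ _).1 (by simp [hN])
  have a16 : G.Adj v₁ v₆ := (G.mem_neighborFinset _ _).1 (by simp [hN])
  have a56 : G.Adj v₅ v₆ := by
    refine adj_of_even_card_inter_neighborFinset (t := {v₂, v₃, v₄}) (heven _ _ a15.ne) ?_ ?_ ?_
    · rw [hN]; intro z; simp only [mem_insert, mem_singleton]; tauto
    · simp [insert_subset_iff, hN, a25.symm, a35.symm, a45.symm]
    · rw [card_insert_of_notMem (by simp [a23.ne, a24.ne]), card_pair a34.ne]; decide
  have hK6 : G.IsNClique 6 {v₁, v₂, v₃, v₄, v₅, v₆} := by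
    refine .insert (.insert (.insert (.insert (.insert (isNClique_singleton.2 rfl) ?_) ?_) ?_) ?_) ?_
      <;> simp [*]
  exact hreg.nonempty_iso_top_of_isNClique hconn.preconnected hK6
end

section
/- Let S be the skew-adjacency matrix of an oriented graph G^σ on n vertices with SᵀS = k·Iₙ. Then n·k is even and every eigenvalue of S is ±i√k; in particular the skew energy of G^σ equals n√k. -/
/-!
Skew-symmetry turns `SᵀS = k • 1` into `S² = -k • 1`, so every complex eigenvalue `z` of `S`
satisfies `z² = -k`, while `SᵀS = k • 1` makes every singular value `√k`. If `n` is odd,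
`det S = det Sᵀ = (-1)ⁿ det S` forces `det S = 0`, which contradicts `(det S)² = kⁿ`
unless `k = 0`.
-/

open Matrix BigOperators

theorem spectrum.sq_eq_of_sq_eq_algebraMap {𝕜 A : Type*} [Field 𝕜] [Ring A] [Algebra 𝕜 A]
    {a : A} {c : 𝕜} (ha : a ^ 2 = algebraMap 𝕜 A c) {z : 𝕜} (hz : z ∈ spectrum 𝕜 a) :
    z ^ 2 = c := by
  rcases subsingleton_or_nontrivial A with hA | hA
  · simp [spectrum.of_subsingleton] at hz
  · simpa [ha] using spectrum.pow_mem_pow a 2 hz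

namespace Matrix

variable {ι : Type*} [Fintype ι] [DecidableEq ι]

theorem sq_eq_of_mem_roots_charpoly {K : Type*} [Field K] {M : Matrix ι ι K} {c : K}
    (hM : M ^ 2 = c • 1) {z : K} (hz : z ∈ M.charpoly.roots) : z ^ 2 = c := by
  refine spectrum.sq_eq_of_sq_eq_algebraMap (a := M) ?_ ?_
  · rw [hM, Algebra.algebraMap_eq_smul_one]
  · exact mem_spectrum_iff_isRoot_charpoly.mpr (Polynomial.isRoot_of_mem_roots hz)

theorem det_eq_zero_of_transpose_eq_neg {R : Type*} [CommRing R] [IsAddTorsionFree R]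
    {S : Matrix ι ι R} (hS : Sᵀ = -S) (hodd : Odd (Fintype.card ι)) : S.det = 0 := by
  have h : S.det = -S.det := by
    conv_lhs => rw [← det_transpose, hS, det_neg, hodd.neg_one_pow, neg_one_mul]
  exact self_eq_neg.mp h

theorem even_card_mul_of_transpose_mul_self_eq_smul_one {R : Type*} [CommRing R]
    [NoZeroDivisors R] [CharZero R] {S : Matrix ι ι R} (hS : Sᵀ = -S) {k : ℕ} (h : Sᵀ * S = (k : R) • 1) :
    Even (Fintype.card ι * k) := by
  rcases Nat.even_or_odd (Fintype.card ι) with hev | hodd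
  · exact hev.mul_right k
  · have hdet := congrArg det h
    rw [det_mul, det_transpose, det_eq_zero_of_transpose_eq_neg hS hodd, zero_mul, det_smul,
      det_one, mul_one, eq_comm, pow_eq_zero_iff hodd.pos.ne', Nat.cast_eq_zero] at hdet
    simp [hdet]

theorem IsHermitian.eigenvalues_eq_of_eq_smul_one_s18 {𝕜 : Type*} [RCLike 𝕜] {A : Matrix ι ι 𝕜}
    (hA : A.IsHermitian) {c : ℝ} (h : A = c • 1) (i : ι) : hA.eigenvalues i = c := by
  subst h
  rw [hA.eigenvalues_eq i, smul_mulVec, one_mulVec, dotProduct_smul,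
    dotProduct_comm, ← EuclideanSpace.inner_eq_star_dotProduct, inner_self_eq_norm_sq_to_K,
    hA.eigenvectorBasis.orthonormal.1 i]
  simp [RCLike.smul_re]

end Matrix

theorem eigenvalues_of_optimum_general {n k : ℕ}
    (G : SimpleGraph (Fin n)) (S : Matrix (Fin n) (Fin n) ℝ)
    (hS : IsSkewAdj G S) (h : Sᵀ * S = (k : ℝ) • 1) :
    Even (n * k) ∧
    (∀ z ∈ (S.map (Complex.ofReal)).charpoly.roots,
        z = Complex.I * (Real.sqrt k : ℂ) ∨ z = -(Complex.I * (Real.sqrt k : ℂ))) ∧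
    skewEnergy S = n * Real.sqrt k := by
  have hskew : Sᵀ = -S := hS.1
  refine ⟨by simpa using even_card_mul_of_transpose_mul_self_eq_smul_one hskew h, ?_, ?_⟩
  · have hsq : S.map Complex.ofReal ^ 2 = -(k : ℂ) • 1 := by
      have : S ^ 2 = -(k : ℝ) • 1 := by rw [sq, neg_smul, ← h, hskew, neg_mul, neg_neg]
      change Complex.ofRealHom.mapMatrix S ^ 2 = _
      rw [← map_pow, this]
      ext i j
      by_cases hij : i = j <;> simp [hij, one_apply]
    intro z hz
    refine sq_eq_sq_iff_eq_or_eq_neg.mp ?_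
    rw [sq_eq_of_mem_roots_charpoly hsq hz, mul_pow, Complex.I_sq, ← Complex.ofReal_pow,
      Real.sq_sqrt k.cast_nonneg]
    push_cast; ring
  · have hgram : Sᴴ * S = (k : ℝ) • 1 := by rwa [conjTranspose_eq_transpose_of_trivial]
    have heig := (isHermitian_conjTranspose_mul_self S).eigenvalues_eq_of_eq_smul_one_s18 hgram
    simp only [skewEnergy, heig, Finset.sum_const, Finset.card_univ, Fintype.card_fin, nsmul_eq_mul]

theorem eigenvalues_of_optimum {n k : ℕ} (hk : 0 < k)
    (G : SimpleGraph (Fin n)) (S : Matrix (Fin n) (Fin n) ℝ)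
    (hS : IsSkewAdj G S) (h : Sᵀ * S = (k : ℝ) • 1) :
    Even (n * k) ∧
    (∀ z ∈ (S.map (Complex.ofReal)).charpoly.roots,
        z = Complex.I * (Real.sqrt k : ℂ) ∨ z = -(Complex.I * (Real.sqrt k : ℂ))) ∧
    skewEnergy S = n * Real.sqrt k :=
  eigenvalues_of_optimum_general G S hS h
end
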